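/- arXiv:2511.20466 — 4 statements merged into one kernel-verified Lean document; each statement's English description precedes it below -/
import Mathlib

section
/- Let Θ ⊂ (0,1) × (0,∞) be compact, let k ≥ 1, and let z₁, …, z_k ∈ (0,∞). Suppose θ* = (γ*, σ*) lies in the interior of Θ and is a local minimizer over Θ of the map θ = (γ,σ) ↦ ∫₀^∞ ( k⁻¹ Σ_{j=1}^k 1{z_j > x} − S_{γ,σ}(x) )² dx. Then k⁻¹ Σ_{j=1}^k ψ_γ(z_j; γ*, σ*) = 0 and k⁻¹ Σ_{j=1}^k ψ_σ(z_j; γ*, σ*) = 0. -/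
/-!
Expanding the square, the criterion is `∫ Ŝ² - 2 ∫ Ŝ S_θ + ∫ S_θ²`, where `Ŝ` is the empirical
survival function. The first term does not depend on `θ`, and for `0 < γ < 1` the other two are
explicit: `∫₀^∞ S_θ² = σ / (2 - γ)`, and `∫ Ŝ S_θ = k⁻¹ Σ_j ∫₀^{z_j} S_θ` with
`∫₀^z S_θ = σ / (γ - 1) ((1 + γ z / σ)^((γ - 1) / γ) - 1)`. So near an interior point the criterion
is a constant plus `2 k⁻¹ Σ_j c(γ, σ, z_j)` for an elementary function `c`, whose partial
derivatives in `γ` and `σ` are `ψ_γ` and `ψ_σ`; Fermat's rule at the local minimizer gives the two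
estimating equations.
-/

open Real MeasureTheory

/-- Survival function of the generalized Pareto distribution GPD(γ,σ). -/
noncomputable def gpdSurvival (γ σ x : ℝ) : ℝ := (1 + γ * x / σ) ^ (-1 / γ : ℝ)

/-- The γ-component of the estimating function ψ. -/
noncomputable def psiGamma (γ σ x : ℝ) : ℝ :=
  σ / (2 * (γ - 2) ^ 2) +
    ((γ - 1) ^ 2 * γ ^ 2)⁻¹ *
      (-(γ ^ 2 * σ) +
        (σ / (σ + γ * x)) ^ (1 / γ : ℝ) *
          (γ * (γ * σ + (2 * γ - 1) * x) -
            (γ - 1) * (σ + γ * x) * Real.log (1 + γ * x / σ)))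

/-- The σ-component of the estimating function ψ. -/
noncomputable def psiSigma (γ σ x : ℝ) : ℝ :=
  -(1 / (2 * (γ - 2))) -
    ((γ - 1) * σ)⁻¹ * ((σ + x) * (σ / (σ + γ * x)) ^ (1 / γ : ℝ) - σ)

open Set Filter Topology

theorem hasDerivAt_one_add_mul_div_rpow {γ σ c x : ℝ} (hγ : 0 < γ) (hσ : 0 < σ) (hc : c ≠ γ)
    (hx : 0 ≤ x) :
    HasDerivAt (fun x => σ / (γ - c) * (1 + γ * x / σ) ^ ((γ - c) / γ))
      ((1 + γ * x / σ) ^ (-c / γ)) x := by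
  have hbase : 0 < 1 + γ * x / σ := by positivity
  have hγc : γ - c ≠ 0 := sub_ne_zero.mpr hc.symm
  have hlin : HasDerivAt (fun x => 1 + γ * x / σ) (γ / σ) x := by
    simpa using (((hasDerivAt_id x).const_mul γ).div_const σ).const_add 1
  refine ((hlin.rpow_const (p := (γ - c) / γ) (Or.inl hbase.ne')).const_mul
    (σ / (γ - c))).congr_deriv ?_
  rw [show (γ - c) / γ - 1 = -c / γ by field_simp; ring]
  field_simp

theorem continuousOn_gpdSurvival {γ σ : ℝ} (hγ : 0 ≤ γ) (hσ : 0 < σ) :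
    ContinuousOn (gpdSurvival γ σ) (Ici 0) :=
  ContinuousOn.rpow_const (by fun_prop) fun x hx => Or.inl (by have := mem_Ici.mp hx; positivity)

theorem gpdSurvival_sq {γ σ x : ℝ} (hγ : 0 ≤ γ) (hσ : 0 < σ) (hx : 0 ≤ x) :
    gpdSurvival γ σ x ^ 2 = (1 + γ * x / σ) ^ (-2 / γ) := by
  rw [gpdSurvival, ← Real.rpow_mul_natCast (by positivity)]
  ring_nf

theorem integral_gpdSurvival_Ioo {γ σ z : ℝ} (hγ : 0 < γ) (hγ1 : γ ≠ 1) (hσ : 0 < σ) (hz : 0 ≤ z) :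
    ∫ x in Ioo 0 z, gpdSurvival γ σ x
      = σ / (γ - 1) * ((1 + γ * z / σ) ^ ((γ - 1) / γ) - 1) := by
  have hderiv : ∀ x ∈ uIcc 0 z, HasDerivAt
      (fun x => σ / (γ - 1) * (1 + γ * x / σ) ^ ((γ - 1) / γ)) (gpdSurvival γ σ x) x := by
    intro x hx
    rw [uIcc_of_le hz] at hx
    exact hasDerivAt_one_add_mul_div_rpow hγ hσ hγ1.symm hx.1
  have hint : IntervalIntegrable (gpdSurvival γ σ) volume 0 z :=
    ((continuousOn_gpdSurvival hγ.le hσ).mono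
      (by simp [uIcc_of_le hz, Icc_subset_Ici_self])).intervalIntegrable
  rw [← integral_Ioc_eq_integral_Ioo, ← intervalIntegral.integral_of_le hz,
    intervalIntegral.integral_eq_sub_of_hasDerivAt hderiv hint]
  simp
  ring

theorem tendsto_one_add_mul_div_rpow_atTop {γ σ p : ℝ} (hγ : 0 < γ) (hσ : 0 < σ) (hp : p < 0) :
    Tendsto (fun x => (1 + γ * x / σ) ^ p) atTop (𝓝 0) := by
  have hlin : Tendsto (fun x : ℝ => 1 + γ * x / σ) atTop atTop :=
    tendsto_atTop_add_const_left _ _ ((tendsto_id.const_mul_atTop hγ).atTop_div_const hσ)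
  simpa [Function.comp_def] using (tendsto_rpow_neg_atTop (neg_pos.mpr hp)).comp hlin

theorem integrableOn_gpdSurvival_sq_and_integral {γ σ : ℝ} (hγ : 0 < γ) (hγ2 : γ < 2) (hσ : 0 < σ) :
    IntegrableOn (fun x => gpdSurvival γ σ x ^ 2) (Ioi 0) ∧
      ∫ x in Ioi 0, gpdSurvival γ σ x ^ 2 = σ / (2 - γ) := by
  have hderiv : ∀ x ∈ Ici (0 : ℝ), HasDerivAt
      (fun x => σ / (γ - 2) * (1 + γ * x / σ) ^ ((γ - 2) / γ)) (gpdSurvival γ σ x ^ 2) x := by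
    intro x hx
    rw [gpdSurvival_sq hγ.le hσ hx]
    exact hasDerivAt_one_add_mul_div_rpow hγ hσ hγ2.ne' hx
  have hlim : Tendsto (fun x => σ / (γ - 2) * (1 + γ * x / σ) ^ ((γ - 2) / γ)) atTop (𝓝 0) := by
    simpa using (tendsto_one_add_mul_div_rpow_atTop hγ hσ
      (div_neg_of_neg_of_pos (by linarith) hγ)).const_mul (σ / (γ - 2))
  have hint := integrableOn_Ioi_deriv_of_nonneg' hderiv (fun x _ => sq_nonneg _) hlim
  refine ⟨hint, ?_⟩
  rw [integral_Ioi_of_hasDerivAt_of_tendsto' hderiv hint hlim]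
  have : γ - 2 ≠ 0 := by linarith
  have : 2 - γ ≠ 0 := by linarith
  simp
  field_simp
  ring

/-- The θ-dependent part of the criterion contributed by one observation `z`:
`½ ∫₀^∞ S_{γ,σ}² - ∫₀^z S_{γ,σ}`. -/
noncomputable def gpdContrast (γ σ z : ℝ) : ℝ :=
  σ / (2 * (2 - γ)) - σ / (γ - 1) * ((1 + γ * z / σ) ^ ((γ - 1) / γ) - 1)

theorem div_add_mul_rpow_one_div {γ σ z : ℝ} (hγ : 0 ≤ γ) (hσ : 0 < σ) (hz : 0 ≤ z) :
    (σ / (σ + γ * z)) ^ (1 / γ) = gpdSurvival γ σ z := by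
  have hbase : 0 < 1 + γ * z / σ := by positivity
  rw [gpdSurvival, neg_div, Real.rpow_neg hbase.le, ← Real.inv_rpow hbase.le]
  congr 1
  field_simp

theorem one_add_mul_div_rpow_eq_mul_gpdSurvival {γ σ z : ℝ} (hγ : 0 < γ) (hσ : 0 < σ) (hz : 0 ≤ z) :
    (1 + γ * z / σ) ^ ((γ - 1) / γ) = (1 + γ * z / σ) * gpdSurvival γ σ z := by
  have hbase : 0 < 1 + γ * z / σ := by positivity
  rw [show (γ - 1) / γ = 1 + -1 / γ by field_simp; ring, Real.rpow_add hbase, Real.rpow_one,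
    gpdSurvival]

theorem hasDerivAt_gpdContrast_shape {γ σ z : ℝ} (hγ : 0 < γ) (hγ1 : γ ≠ 1) (hγ2 : γ ≠ 2)
    (hσ : 0 < σ) (hz : 0 ≤ z) :
    HasDerivAt (fun g => gpdContrast g σ z) (psiGamma γ σ z) γ := by
  have hbase : 0 < 1 + γ * z / σ := by positivity
  have hγ1' : γ - 1 ≠ 0 := sub_ne_zero.mpr hγ1
  have hγ2' : 2 - γ ≠ 0 := sub_ne_zero.mpr hγ2.symm
  have hw : HasDerivAt (fun g => 1 + g * z / σ) (z / σ) γ := by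
    simpa using ((hasDerivAt_id γ).mul_const z).div_const σ |>.const_add 1
  have he : HasDerivAt (fun g => (g - 1) / g) (1 / γ ^ 2) γ := by
    refine (((hasDerivAt_id γ).sub_const 1).div (hasDerivAt_id γ) hγ.ne').congr_deriv ?_
    simp
  have hpow := hw.rpow he hbase
  have hA : HasDerivAt (fun g => σ / (2 * (2 - g))) (σ / (2 * (2 - γ) ^ 2)) γ := by
    refine ((hasDerivAt_const γ σ).div (((hasDerivAt_id' γ).const_sub 2).const_mul 2)
      (by simpa using hγ2')).congr_deriv ?_
    field_simp
    ring
  have hB : HasDerivAt (fun g => σ / (g - 1)) (-σ / (γ - 1) ^ 2) γ := by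
    refine ((hasDerivAt_const γ σ).div ((hasDerivAt_id γ).sub_const 1) hγ1').congr_deriv ?_
    simp
  refine (hA.sub (hB.mul (hpow.sub_const 1))).congr_deriv ?_
  rw [show (γ - 1) / γ - 1 = -1 / γ by field_simp; ring, ← gpdSurvival,
    one_add_mul_div_rpow_eq_mul_gpdSurvival hγ hσ hz, psiGamma,
    div_add_mul_rpow_one_div hγ.le hσ hz]
  field_simp
  ring

theorem hasDerivAt_gpdContrast_scale {γ σ z : ℝ} (hγ : 0 < γ) (hγ1 : γ ≠ 1) (hγ2 : γ ≠ 2)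
    (hσ : 0 < σ) (hz : 0 ≤ z) :
    HasDerivAt (fun s => gpdContrast γ s z) (psiSigma γ σ z) σ := by
  have hbase : 0 < 1 + γ * z / σ := by positivity
  have hγ1' : γ - 1 ≠ 0 := sub_ne_zero.mpr hγ1
  have hγ2' : 2 - γ ≠ 0 := sub_ne_zero.mpr hγ2.symm
  have hw : HasDerivAt (fun s => 1 + γ * z / s) (-(γ * z) / σ ^ 2) σ := by
    refine ((hasDerivAt_inv hσ.ne').const_mul (γ * z)).const_add 1 |>.congr_deriv ?_
    ring
  have hpow := hw.rpow_const (p := (γ - 1) / γ) (Or.inl hbase.ne')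
  refine (((hasDerivAt_id' σ).div_const (2 * (2 - γ))).sub
    (((hasDerivAt_id' σ).div_const (γ - 1)).mul (hpow.sub_const 1))).congr_deriv ?_
  rw [show (γ - 1) / γ - 1 = -1 / γ by field_simp; ring, ← gpdSurvival,
    one_add_mul_div_rpow_eq_mul_gpdSurvival hγ hσ hz, psiSigma,
    div_add_mul_rpow_one_div hγ.le hσ hz]
  field_simp
  ring

noncomputable def empiricalSurvival {k : ℕ} (z : Fin k → ℝ) (x : ℝ) : ℝ :=
  (k : ℝ)⁻¹ * ∑ j, if x < z j then (1 : ℝ) else 0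

theorem ite_lt_eq_indicator (f : ℝ → ℝ) (c : ℝ) :
    (fun x => if x < c then f x else 0) = (Iio c).indicator f := by
  ext x
  simp [indicator_apply]

theorem integrableOn_Ioi_ite_lt {f : ℝ → ℝ} {a c : ℝ} (hf : IntegrableOn f (Ioo a c)) :
    IntegrableOn (fun x => if x < c then f x else 0) (Ioi a) := by
  rw [ite_lt_eq_indicator, IntegrableOn, integrable_indicator_iff measurableSet_Iio,
    IntegrableOn, Measure.restrict_restrict measurableSet_Iio, Iio_inter_Ioi]
  exact hf

theorem setIntegral_Ioi_ite_lt (f : ℝ → ℝ) (a c : ℝ) :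
    ∫ x in Ioi a, (if x < c then f x else 0) = ∫ x in Ioo a c, f x := by
  rw [ite_lt_eq_indicator, setIntegral_indicator measurableSet_Iio, Ioi_inter_Iio]

section empiricalSurvival

variable {k : ℕ} {z : Fin k → ℝ} {f : ℝ → ℝ}

theorem empiricalSurvival_mul (x : ℝ) :
    empiricalSurvival z x * f x = (k : ℝ)⁻¹ * ∑ j, if x < z j then f x else 0 := by
  simp only [empiricalSurvival, mul_assoc, Finset.sum_mul, ite_mul, one_mul, zero_mul]

theorem integrableOn_empiricalSurvival_mul (hf : ∀ j, IntegrableOn f (Ioo 0 (z j))) :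
    IntegrableOn (fun x => empiricalSurvival z x * f x) (Ioi 0) := by
  simp only [empiricalSurvival_mul]
  exact (integrable_finsetSum _ fun j _ => integrableOn_Ioi_ite_lt (hf j)).const_mul _

theorem integral_empiricalSurvival_mul (hf : ∀ j, IntegrableOn f (Ioo 0 (z j))) :
    ∫ x in Ioi 0, empiricalSurvival z x * f x
      = (k : ℝ)⁻¹ * ∑ j, ∫ x in Ioo 0 (z j), f x := by
  simp only [empiricalSurvival_mul]
  rw [integral_const_mul, integral_finsetSum _ fun j _ => integrableOn_Ioi_ite_lt (hf j)]
  simp only [setIntegral_Ioi_ite_lt]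

theorem integrableOn_empiricalSurvival_sq :
    IntegrableOn (fun x => empiricalSurvival z x ^ 2) (Ioi 0) := by
  have hE : IntegrableOn (empiricalSurvival z) (Ioi 0) := by
    simpa using integrableOn_empiricalSurvival_mul (z := z) (f := fun _ => 1)
      fun j => integrableOn_const measure_Ioo_lt_top.ne
  simpa [sq] using integrableOn_empiricalSurvival_mul fun j => hE.mono_set Ioo_subset_Ioi_self

end empiricalSurvival

theorem integral_sq_empiricalSurvival_sub_gpdSurvival {k : ℕ} (hk : k ≠ 0) {z : Fin k → ℝ}
    (hz : ∀ j, 0 ≤ z j) {γ σ : ℝ} (hγ : 0 < γ) (hγ1 : γ ≠ 1) (hγ2 : γ < 2) (hσ : 0 < σ) :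
    ∫ x in Ioi 0, (empiricalSurvival z x - gpdSurvival γ σ x) ^ 2
      = (∫ x in Ioi 0, empiricalSurvival z x ^ 2)
        + 2 * ((k : ℝ)⁻¹ * ∑ j, gpdContrast γ σ (z j)) := by
  obtain ⟨hS2int, hS2⟩ := integrableOn_gpdSurvival_sq_and_integral hγ hγ2 hσ
  have hSint : ∀ j, IntegrableOn (gpdSurvival γ σ) (Ioo 0 (z j)) := fun j =>
    ((continuousOn_gpdSurvival hγ.le hσ).mono Icc_subset_Ici_self).integrableOn_Icc.mono_set
      Ioo_subset_Icc_self
  have hES := integrableOn_empiricalSurvival_mul hSint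
  have hexpand : ∀ x, (empiricalSurvival z x - gpdSurvival γ σ x) ^ 2
      = (empiricalSurvival z x ^ 2 - 2 * (empiricalSurvival z x * gpdSurvival γ σ x))
        + gpdSurvival γ σ x ^ 2 := fun x => by ring
  simp only [hexpand]
  rw [integral_add (integrableOn_empiricalSurvival_sq.fun_sub (hES.const_mul 2)) hS2int,
    integral_sub integrableOn_empiricalSurvival_sq (hES.const_mul 2), integral_const_mul,
    integral_empiricalSurvival_mul hSint, hS2]
  simp only [integral_gpdSurvival_Ioo hγ hγ1 hσ (hz _), gpdContrast, Finset.sum_sub_distrib,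
    Finset.sum_const, Finset.card_univ, Fintype.card_fin, nsmul_eq_mul]
  set B := ∑ j, σ / (γ - 1) * ((1 + γ * z j / σ) ^ ((γ - 1) / γ) - 1)
  have : (k : ℝ) ≠ 0 := Nat.cast_ne_zero.mpr hk
  have : 2 - γ ≠ 0 := by linarith
  field_simp
  ring

theorem IsLocalMin.hasDerivAt_fst_eq_zero {β : Type*} [TopologicalSpace β] {f : ℝ × β → ℝ}
    {p : ℝ × β} {f' : ℝ} (h : IsLocalMin f p) (hf : HasDerivAt (fun a => f (a, p.2)) f' p.1) :
    f' = 0 :=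
  (h.comp_continuous (by fun_prop : ContinuousAt (fun a => (a, p.2)) p.1)).hasDerivAt_eq_zero hf

theorem IsLocalMin.hasDerivAt_snd_eq_zero {α : Type*} [TopologicalSpace α] {f : α × ℝ → ℝ}
    {p : α × ℝ} {f' : ℝ} (h : IsLocalMin f p) (hf : HasDerivAt (fun b => f (p.1, b)) f' p.2) :
    f' = 0 :=
  (h.comp_continuous (by fun_prop : ContinuousAt (fun b => (p.1, b)) p.2)).hasDerivAt_eq_zero hf

theorem mde_is_z_estimator_general (Θ : Set (ℝ × ℝ)) (hΘsub : Θ ⊆ Set.Ioo (0 : ℝ) 1 ×ˢ Set.Ioi (0 : ℝ))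
    (k : ℕ) (hk : 1 ≤ k) (z : Fin k → ℝ) (hz : ∀ j, 0 < z j)
    (θs : ℝ × ℝ) (hθint : θs ∈ interior Θ)
    (hmin : IsLocalMinOn
      (fun θ : ℝ × ℝ => ∫ x in Set.Ioi (0 : ℝ),
        ((k : ℝ)⁻¹ * ∑ j, (if x < z j then (1 : ℝ) else 0) - gpdSurvival θ.1 θ.2 x) ^ 2)
      Θ θs) :
    (k : ℝ)⁻¹ * ∑ j, psiGamma θs.1 θs.2 (z j) = 0 ∧
    (k : ℝ)⁻¹ * ∑ j, psiSigma θs.1 θs.2 (z j) = 0 := by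
  obtain ⟨⟨hγ0, hγ1⟩, hσ⟩ := hΘsub (interior_subset hθint)
  have hz' : ∀ j, 0 ≤ z j := fun j => (hz j).le
  set C := ∫ x in Ioi 0, empiricalSurvival z x ^ 2
  have hloc : IsLocalMin (fun θ : ℝ × ℝ => C + 2 * ((k : ℝ)⁻¹ * ∑ j, gpdContrast θ.1 θ.2 (z j)))
      θs := by
    refine (hmin.isLocalMin (mem_interior_iff_mem_nhds.mp hθint)).congr ?_
    filter_upwards [(isOpen_Ioo.prod isOpen_Ioi).mem_nhds ⟨⟨hγ0, hγ1⟩, hσ⟩]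
      with θ ⟨⟨hθ0, hθ1⟩, hθσ⟩
    exact integral_sq_empiricalSurvival_sub_gpdSurvival (by omega) hz' hθ0 hθ1.ne
      (by linarith) hθσ
  constructor
  · simpa using hloc.hasDerivAt_fst_eq_zero ((((HasDerivAt.fun_sum fun j _ =>
      hasDerivAt_gpdContrast_shape hγ0 hγ1.ne (by linarith) hσ (hz' j)).const_mul _).const_mul
        2).const_add C)
  · simpa using hloc.hasDerivAt_snd_eq_zero ((((HasDerivAt.fun_sum fun j _ =>
      hasDerivAt_gpdContrast_scale hγ0 hγ1.ne (by linarith) hσ (hz' j)).const_mul _).const_mul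
        2).const_add C)

/-- any interior local minimizer over a compact `Θ ⊆ (0,1) × (0,∞)` of the
`L²`-distance between the empirical survival function of `z₁,…,z_k` and the GPD survival
function is a zero of the estimating equations. -/
theorem mde_is_z_estimator (Θ : Set (ℝ × ℝ)) (hΘsub : Θ ⊆ Set.Ioo (0 : ℝ) 1 ×ˢ Set.Ioi (0 : ℝ))
    (hΘcomp : IsCompact Θ) (k : ℕ) (hk : 1 ≤ k) (z : Fin k → ℝ) (hz : ∀ j, 0 < z j)
    (θs : ℝ × ℝ) (hθint : θs ∈ interior Θ)
    (hmin : IsLocalMinOn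
      (fun θ : ℝ × ℝ => ∫ x in Set.Ioi (0 : ℝ),
        ((k : ℝ)⁻¹ * ∑ j, (if x < z j then (1 : ℝ) else 0) - gpdSurvival θ.1 θ.2 x) ^ 2)
      Θ θs) :
    (k : ℝ)⁻¹ * ∑ j, psiGamma θs.1 θs.2 (z j) = 0 ∧
    (k : ℝ)⁻¹ * ∑ j, psiSigma θs.1 θs.2 (z j) = 0 :=
  mde_is_z_estimator_general Θ hΘsub k hk z hz θs hθint hmin
end

section
/- For every γ ∈ (0,1) and σ > 0, ∫₀^∞ ( ∫₀^u D_γ(y) dy ) f_{γ,σ}(u) du = −σ / ( 2(γ−2)² ), where D_γ(y) = −(1 + γy/σ)^{−1/γ} ( log(1 + γy/σ)/γ² − (y/(γσ))/(1 + γy/σ) ) is the partial derivative of F_{γ,σ}(y) with respect to γ. -/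
open Real MeasureTheory

/-- Density of GPD(γ,σ). -/
noncomputable def gpdPdf (γ σ x : ℝ) : ℝ := σ⁻¹ * (1 + γ * x / σ) ^ (-1 / γ - 1 : ℝ)

/-- Partial derivative of the GPD cdf `F_{γ,σ}(y)` with respect to the shape parameter γ. -/
noncomputable def Dgamma (γ σ y : ℝ) : ℝ :=
  -(1 + γ * y / σ) ^ (-1 / γ : ℝ) *
    (Real.log (1 + γ * y / σ) / γ ^ 2 - (y / (γ * σ)) / (1 + γ * y / σ))

/-!
In the variable `t = 1 + γ y / σ`, with `p = -1/γ`, one has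
`D_γ(y) = -(t^p log t - t^p + t^(p-1)) / γ²`, which has the explicit primitive `σ Φ(t)` in `y`,
where `Φ = dgammaPrimitive γ` is built from `t^(p+1) log t`, `t^(p+1)` and `t^p`. The inner
integral is therefore `σ (Φ(t) - Φ(1))`, and since `f_{γ,σ}(u) = σ⁻¹ t^(p-1)`, the substitution
`t = 1 + γ u / σ` turns the double integral into `(σ/γ) ∫₁^∞ (Φ(t) - Φ(1)) t^(p-1) dt`. That
integrand is a combination of `t^c log t` and `t^c` with `c < -1`, whose integrals over `(1, ∞)`
are `1/(c+1)²` and `-1/(c+1)`.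
-/

open Set Filter Topology

theorem integral_comp_one_add_mul_Ioi {E : Type*} [NormedAddCommGroup E] [NormedSpace ℝ E]
    (g : ℝ → E) {a : ℝ} (ha : 0 < a) :
    ∫ x in Ioi 0, g (1 + a * x) = a⁻¹ • ∫ t in Ioi 1, g t := by
  rw [integral_comp_mul_left_Ioi (fun x => g (1 + x)) 0 ha, mul_zero]
  congr 1
  simpa using (measurePreserving_add_left volume (1 : ℝ)).setIntegral_preimage_emb
    (measurableEmbedding_addLeft 1) g (Ioi 1)

section RpowMulLog

variable {c : ℝ}

theorem hasDerivAt_rpow_mul_log_primitive (hc : c + 1 ≠ 0) {t : ℝ} (ht : 0 < t) :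
    HasDerivAt (fun x => x ^ (c + 1) * (log x / (c + 1) - 1 / (c + 1) ^ 2))
      (t ^ c * log t) t := by
  have h := (hasDerivAt_rpow_const (p := c + 1) (Or.inl ht.ne')).mul
    (((hasDerivAt_log ht.ne').div_const (c + 1)).sub_const (1 / (c + 1) ^ 2))
  refine h.congr_deriv ?_
  rw [add_sub_cancel_right, rpow_add_one ht.ne']
  field_simp
  ring

theorem tendsto_rpow_mul_log_primitive_atTop (hc : c < -1) :
    Tendsto (fun x => x ^ (c + 1) * (log x / (c + 1) - 1 / (c + 1) ^ 2)) atTop (𝓝 0) := by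
  have hr : 0 < -(c + 1) := by linarith
  have hpow : Tendsto (fun x : ℝ => x ^ (c + 1)) atTop (𝓝 0) := by
    simpa using tendsto_rpow_neg_atTop hr
  have hlog : Tendsto (fun x : ℝ => log x * x ^ (c + 1)) atTop (𝓝 0) := by
    refine (isLittleO_log_rpow_atTop hr).tendsto_div_nhds_zero.congr' ?_
    filter_upwards [eventually_gt_atTop 0] with x hx
    rw [rpow_neg hx.le, div_inv_eq_mul]
  have h := (hlog.div_const (c + 1)).sub (hpow.mul_const (1 / (c + 1) ^ 2))
  simp only [zero_div, zero_mul, sub_zero] at h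
  exact h.congr fun x => by ring

theorem rpow_mul_log_nonneg_of_one_le {t : ℝ} (ht : 1 ≤ t) : 0 ≤ t ^ c * log t :=
  mul_nonneg (rpow_nonneg (zero_le_one.trans ht) c) (log_nonneg ht)

theorem integrableOn_Ioi_rpow_mul_log (hc : c < -1) :
    IntegrableOn (fun t => t ^ c * log t) (Ioi 1) :=
  integrableOn_Ioi_deriv_of_nonneg'
    (fun _ ht => hasDerivAt_rpow_mul_log_primitive (by linarith) (zero_lt_one.trans_le ht))
    (fun _ ht => rpow_mul_log_nonneg_of_one_le (le_of_lt ht))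
    (tendsto_rpow_mul_log_primitive_atTop hc)

theorem integral_Ioi_rpow_mul_log (hc : c < -1) :
    ∫ t in Ioi 1, t ^ c * log t = 1 / (c + 1) ^ 2 := by
  rw [integral_Ioi_of_hasDerivAt_of_nonneg'
    (fun _ ht => hasDerivAt_rpow_mul_log_primitive (by linarith) (zero_lt_one.trans_le ht))
    (fun _ ht => rpow_mul_log_nonneg_of_one_le (le_of_lt ht))
    (tendsto_rpow_mul_log_primitive_atTop hc)]
  simp

end RpowMulLog

noncomputable def dgammaPrimitive (γ t : ℝ) : ℝ :=
  -(t ^ (-1 / γ + 1) * (log t / (-1 / γ + 1) - 1 / (-1 / γ + 1) ^ 2) -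
    t ^ (-1 / γ + 1) / (-1 / γ + 1) - γ * t ^ (-1 / γ)) / γ ^ 3

section Dgamma

variable {γ : ℝ}

theorem hasDerivAt_dgammaPrimitive (hγ0 : γ ≠ 0) (hγ1 : γ ≠ 1) {t : ℝ} (ht : 0 < t) :
    HasDerivAt (dgammaPrimitive γ)
      (-(t ^ (-1 / γ) * log t - t ^ (-1 / γ) + t ^ (-1 / γ - 1)) / γ ^ 3) t := by
  have hq : -1 / γ + 1 ≠ 0 := by
    intro h
    field_simp at h
    exact hγ1 (by linarith)
  have hlog := hasDerivAt_rpow_mul_log_primitive hq ht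
  have hpow := hasDerivAt_rpow_const (x := t) (p := -1 / γ + 1) (Or.inl ht.ne')
  have hpow' := hasDerivAt_rpow_const (x := t) (p := -1 / γ) (Or.inl ht.ne')
  have h := (((hlog.sub (hpow.div_const (-1 / γ + 1))).sub (hpow'.const_mul γ)).neg).div_const
    (γ ^ 3)
  refine h.congr_deriv ?_
  rw [add_sub_cancel_right, mul_div_cancel_left₀ _ hq]
  field_simp
  ring

theorem hasDerivAt_dgammaPrimitive_comp {σ : ℝ} (hγ0 : γ ≠ 0) (hγ1 : γ ≠ 1) (hσ : σ ≠ 0) {y : ℝ}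
    (hy : 0 < 1 + γ * y / σ) :
    HasDerivAt (fun y => σ * dgammaPrimitive γ (1 + γ * y / σ)) (Dgamma γ σ y) y := by
  have hT : HasDerivAt (fun y => 1 + γ * y / σ) (γ / σ) y := by
    simpa using (((hasDerivAt_id y).const_mul γ).div_const σ).const_add 1
  have h := ((hasDerivAt_dgammaPrimitive hγ0 hγ1 hy).comp y hT).const_mul σ
  refine h.congr_deriv ?_
  have hy' : y / (γ * σ) = ((1 + γ * y / σ) - 1) / γ ^ 2 := by field_simp; ring
  rw [Dgamma, hy', rpow_sub_one hy.ne']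
  generalize 1 + γ * y / σ = t at hy ⊢
  field_simp
  ring

theorem continuousOn_Dgamma {σ : ℝ} {s : Set ℝ} (hs : ∀ y ∈ s, 0 < 1 + γ * y / σ) :
    ContinuousOn (Dgamma γ σ) s := by
  have hne : ∀ y ∈ s, 1 + γ * y / σ ≠ 0 := fun y hy => (hs y hy).ne'
  unfold Dgamma
  fun_prop (disch := assumption)

theorem intervalIntegral_Dgamma {σ : ℝ} (hγ0 : 0 < γ) (hγ1 : γ ≠ 1) (hσ : 0 < σ) {u : ℝ}
    (hu : 0 ≤ u) :
    ∫ y in (0 : ℝ)..u, Dgamma γ σ y =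
      σ * (dgammaPrimitive γ (1 + γ * u / σ) - dgammaPrimitive γ 1) := by
  have hpos : ∀ y ∈ Icc 0 u, 0 < 1 + γ * y / σ := fun y hy => by
    have := hy.1
    positivity
  rw [intervalIntegral.integral_eq_sub_of_hasDerivAt
    (f := fun y => σ * dgammaPrimitive γ (1 + γ * y / σ))]
  · simp [mul_sub]
  · intro y hy
    rw [uIcc_of_le hu] at hy
    exact hasDerivAt_dgammaPrimitive_comp hγ0.ne' hγ1 hσ.ne' (hpos y hy)
  · rw [intervalIntegrable_iff_integrableOn_Icc_of_le hu]
    exact (continuousOn_Dgamma hpos).integrableOn_Icc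

theorem dgammaPrimitive_sub_mul_rpow (hγ0 : γ ≠ 0) (hγ1 : γ ≠ 1) {t : ℝ} (ht : 0 < t) :
    (dgammaPrimitive γ t - dgammaPrimitive γ 1) * t ^ (-1 / γ - 1) =
      1 / (γ ^ 2 * (1 - γ)) * (t ^ (-2 / γ) * log t) +
      (2 * γ - 1) / (γ ^ 2 * (1 - γ) ^ 2) * t ^ (-2 / γ) +
      1 / γ ^ 2 * t ^ (-2 / γ - 1) - 1 / (1 - γ) ^ 2 * t ^ (-1 / γ - 1) := by
  have h₁ : t ^ (-1 / γ + 1) * t ^ (-1 / γ - 1) = t ^ (-2 / γ) := by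
    rw [← rpow_add ht]; ring_nf
  have h₂ : t ^ (-1 / γ) * t ^ (-1 / γ - 1) = t ^ (-2 / γ - 1) := by
    rw [← rpow_add ht]; ring_nf
  have hγ1' : 1 - γ ≠ 0 := sub_ne_zero.mpr hγ1.symm
  have hγ1'' : γ - 1 ≠ 0 := sub_ne_zero.mpr hγ1
  simp only [dgammaPrimitive, one_rpow, log_one, ← h₁, ← h₂]
  generalize t ^ (-1 / γ + 1) = A, t ^ (-1 / γ) = B, t ^ (-1 / γ - 1) = C, log t = L
  rw [show -1 / γ + 1 = (γ - 1) / γ by field_simp; ring]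
  field_simp
  ring

theorem integral_Ioi_dgammaPrimitive_sub_mul_rpow (hγ0 : 0 < γ) (hγ1 : γ < 1) :
    ∫ t in Ioi 1, (dgammaPrimitive γ t - dgammaPrimitive γ 1) * t ^ (-1 / γ - 1) =
      -γ / (2 * (γ - 2) ^ 2) := by
  have hneg (a : ℝ) (ha : a < 0) : a / γ < 0 := div_neg_of_neg_of_pos ha hγ0
  have hlt : -2 / γ < -1 := by rw [div_lt_iff₀ hγ0]; linarith
  have hlt₁ : -2 / γ - 1 < -1 := by linarith [hneg (-2) (by norm_num)]
  have hlt₂ : -1 / γ - 1 < -1 := by linarith [hneg (-1) (by norm_num)]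
  have i₀ := (integrableOn_Ioi_rpow_mul_log hlt).const_mul (1 / (γ ^ 2 * (1 - γ)))
  have i₁ := (integrableOn_Ioi_rpow_of_lt hlt one_pos).const_mul
    ((2 * γ - 1) / (γ ^ 2 * (1 - γ) ^ 2))
  have i₂ := (integrableOn_Ioi_rpow_of_lt hlt₁ one_pos).const_mul (1 / γ ^ 2)
  have i₃ := (integrableOn_Ioi_rpow_of_lt hlt₂ one_pos).const_mul (1 / (1 - γ) ^ 2)
  rw [setIntegral_congr_fun measurableSet_Ioi fun t ht =>
      dgammaPrimitive_sub_mul_rpow hγ0.ne' hγ1.ne (zero_lt_one.trans ht),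
    integral_sub (f := fun t => _ + _ + _) ((i₀.add i₁).add i₂) i₃,
    integral_add (f := fun t => _ + _) (i₀.add i₁) i₂, integral_add i₀ i₁,
    integral_const_mul, integral_const_mul, integral_const_mul, integral_const_mul,
    integral_Ioi_rpow_mul_log hlt, integral_Ioi_rpow_of_lt hlt one_pos,
    integral_Ioi_rpow_of_lt hlt₁ one_pos, integral_Ioi_rpow_of_lt hlt₂ one_pos]
  have hγ1' : 1 - γ ≠ 0 := by linarith
  have hγ2 : γ - 2 ≠ 0 := by linarith
  simp only [one_rpow, sub_add_cancel]
  rw [show -2 / γ + 1 = (γ - 2) / γ by field_simp; ring]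
  field_simp
  ring

end Dgamma

/-- `∫₀^∞ (∫₀^u D_γ(y) dy) f_{γ,σ}(u) du = -σ / (2(γ-2)²)`. -/
theorem integral_integral_Dgamma (γ : ℝ) (hγ : γ ∈ Set.Ioo (0 : ℝ) 1) (σ : ℝ) (hσ : 0 < σ) :
    ∫ u in Set.Ioi (0 : ℝ), (∫ y in (0 : ℝ)..u, Dgamma γ σ y) * gpdPdf γ σ u =
      -σ / (2 * (γ - 2) ^ 2) := by
  obtain ⟨hγ0, hγ1⟩ := hγ
  have hsubst : ∀ u ∈ Ioi (0 : ℝ), (∫ y in (0 : ℝ)..u, Dgamma γ σ y) * gpdPdf γ σ u =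
      (dgammaPrimitive γ (1 + γ / σ * u) - dgammaPrimitive γ 1) *
        (1 + γ / σ * u) ^ (-1 / γ - 1) := by
    intro u hu
    rw [intervalIntegral_Dgamma hγ0 hγ1.ne hσ (le_of_lt hu), gpdPdf, mul_div_right_comm]
    field_simp
  rw [setIntegral_congr_fun measurableSet_Ioi hsubst,
    integral_comp_one_add_mul_Ioi
      (fun t => (dgammaPrimitive γ t - dgammaPrimitive γ 1) * t ^ (-1 / γ - 1)) (by positivity),
    integral_Ioi_dgammaPrimitive_sub_mul_rpow hγ0 hγ1, smul_eq_mul]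
  field_simp
end

section
/- For every γ ∈ (0,1) and σ > 0, the estimating function ψ is unbiased at the true parameter: ∫₀^∞ ψ_γ(x; γ, σ) f_{γ,σ}(x) dx = 0 and ∫₀^∞ ψ_σ(x; γ, σ) f_{γ,σ}(x) dx = 0. -/
open Real MeasureTheory

/-!
In the variable `u = 1 + γ x / σ` one has `(σ / (σ + γ x)) ^ (1/γ) = u ^ (-1/γ)` and
`σ + γ x = σ u`, so both `ψ_γ f` and `ψ_σ f` are linear combinations of `u ^ (-1/γ - 1)`,
`u ^ (-2/γ - 1)`, `u ^ (-2/γ)` and `u ^ (-2/γ) log u`. For `p < -1` the functions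
`(1 + a x) ^ p` and `(1 + a x) ^ p log (1 + a x)` have explicit antiderivatives vanishing at
infinity, so their integrals over `(0, ∞)` are `-1 / (a (p + 1))` and `1 / (a (p + 1)²)`;
with these values the coefficients cancel.
-/

open Set Filter Topology

theorem tendsto_rpow_mul_log_atTop {r : ℝ} (hr : r < 0) :
    Tendsto (fun u : ℝ => u ^ r * log u) atTop (𝓝 0) := by
  refine (isLittleO_log_rpow_atTop (neg_pos.mpr hr)).tendsto_div_nhds_zero.congr' ?_
  filter_upwards [eventually_gt_atTop 0] with u hu
  rw [rpow_neg hu.le, div_inv_eq_mul, mul_comm]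

section OneAddMulRpow

variable {a p : ℝ}

theorem one_add_mul_pos (ha : 0 ≤ a) {x : ℝ} (hx : 0 ≤ x) : 0 < 1 + a * x := by
  positivity

theorem tendsto_one_add_mul_atTop (ha : 0 < a) :
    Tendsto (fun x : ℝ => 1 + a * x) atTop atTop :=
  tendsto_atTop_add_const_left _ _ (tendsto_id.const_mul_atTop ha)

theorem hasDerivAt_one_add_mul (a x : ℝ) : HasDerivAt (fun x : ℝ => 1 + a * x) a x := by
  simpa using ((hasDerivAt_id x).const_mul a).const_add 1

theorem hasDerivAt_one_add_mul_rpow_div (ha : a ≠ 0) (hp : p ≠ -1) {x : ℝ}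
    (hx : 0 < 1 + a * x) :
    HasDerivAt (fun x => (1 + a * x) ^ (p + 1) / (a * (p + 1))) ((1 + a * x) ^ p) x := by
  have hp1 : p + 1 ≠ 0 := fun h => hp (by linarith)
  refine (((hasDerivAt_one_add_mul a x).rpow_const (p := p + 1) (.inl hx.ne')).div_const
    (a * (p + 1))).congr_deriv ?_
  rw [add_sub_cancel_right]
  field_simp

theorem hasDerivAt_one_add_mul_rpow_mul_log (ha : a ≠ 0) (hp : p ≠ -1) {x : ℝ}
    (hx : 0 < 1 + a * x) :
    HasDerivAt (fun x => (1 + a * x) ^ (p + 1) * (log (1 + a * x) - (p + 1)⁻¹) / (a * (p + 1)))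
      ((1 + a * x) ^ p * log (1 + a * x)) x := by
  have hp1 : p + 1 ≠ 0 := fun h => hp (by linarith)
  have hpow := (hasDerivAt_one_add_mul a x).rpow_const (p := p + 1) (.inl hx.ne')
  have hlog := ((hasDerivAt_one_add_mul a x).log hx.ne').sub_const (p + 1)⁻¹
  refine ((hpow.mul hlog).div_const (a * (p + 1))).congr_deriv ?_
  rw [add_sub_cancel_right, rpow_add_one hx.ne']
  field_simp
  ring

theorem tendsto_one_add_mul_rpow_div (ha : 0 < a) (hp : p < -1) :
    Tendsto (fun x => (1 + a * x) ^ (p + 1) / (a * (p + 1))) atTop (𝓝 0) := by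
  simpa using ((tendsto_rpow_neg_atTop (neg_pos.mpr (by linarith : p + 1 < 0))).comp
    (tendsto_one_add_mul_atTop ha)).div_const (a * (p + 1))

theorem tendsto_one_add_mul_rpow_mul_log (ha : 0 < a) (hp : p < -1) :
    Tendsto (fun x => (1 + a * x) ^ (p + 1) * (log (1 + a * x) - (p + 1)⁻¹) / (a * (p + 1)))
      atTop (𝓝 0) := by
  have hp1 : p + 1 < 0 := by linarith
  have h := ((tendsto_rpow_mul_log_atTop hp1).sub
    ((tendsto_rpow_neg_atTop (neg_pos.mpr hp1)).mul_const (p + 1)⁻¹)).comp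
    (tendsto_one_add_mul_atTop ha)
  simpa [mul_sub] using h.div_const (a * (p + 1))

theorem one_add_mul_rpow_mul_log_nonneg (ha : 0 ≤ a) {x : ℝ} (hx : 0 ≤ x) :
    0 ≤ (1 + a * x) ^ p * log (1 + a * x) :=
  mul_nonneg (rpow_nonneg (one_add_mul_pos ha hx).le p)
    (log_nonneg (le_add_of_nonneg_right (mul_nonneg ha hx)))

theorem integrableOn_Ioi_one_add_mul_rpow (ha : 0 < a) (hp : p < -1) :
    IntegrableOn (fun x => (1 + a * x) ^ p) (Ioi 0) :=
  integrableOn_Ioi_deriv_of_nonneg'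
    (fun _ hx => hasDerivAt_one_add_mul_rpow_div ha.ne' (by linarith) (one_add_mul_pos ha.le hx))
    (fun _ hx => (rpow_pos_of_pos (one_add_mul_pos ha.le (le_of_lt hx)) p).le)
    (tendsto_one_add_mul_rpow_div ha hp)

theorem integral_Ioi_one_add_mul_rpow (ha : 0 < a) (hp : p < -1) :
    ∫ x in Ioi 0, (1 + a * x) ^ p = -(a * (p + 1))⁻¹ := by
  rw [integral_Ioi_of_hasDerivAt_of_nonneg'
    (fun _ hx => hasDerivAt_one_add_mul_rpow_div ha.ne' (by linarith) (one_add_mul_pos ha.le hx))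
    (fun _ hx => (rpow_pos_of_pos (one_add_mul_pos ha.le (le_of_lt hx)) p).le)
    (tendsto_one_add_mul_rpow_div ha hp)]
  simp [div_eq_mul_inv]

theorem integrableOn_Ioi_one_add_mul_rpow_mul_log (ha : 0 < a) (hp : p < -1) :
    IntegrableOn (fun x => (1 + a * x) ^ p * log (1 + a * x)) (Ioi 0) :=
  integrableOn_Ioi_deriv_of_nonneg'
    (fun _ hx =>
      hasDerivAt_one_add_mul_rpow_mul_log ha.ne' (by linarith) (one_add_mul_pos ha.le hx))
    (fun _ hx => one_add_mul_rpow_mul_log_nonneg ha.le (le_of_lt hx))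
    (tendsto_one_add_mul_rpow_mul_log ha hp)

theorem integral_Ioi_one_add_mul_rpow_mul_log (ha : 0 < a) (hp : p < -1) :
    ∫ x in Ioi 0, (1 + a * x) ^ p * log (1 + a * x) = (a * (p + 1) ^ 2)⁻¹ := by
  rw [integral_Ioi_of_hasDerivAt_of_nonneg'
    (fun _ hx =>
      hasDerivAt_one_add_mul_rpow_mul_log ha.ne' (by linarith) (one_add_mul_pos ha.le hx))
    (fun _ hx => one_add_mul_rpow_mul_log_nonneg ha.le (le_of_lt hx))
    (tendsto_one_add_mul_rpow_mul_log ha hp)]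
  have hp1 : p + 1 ≠ 0 := by linarith
  simp only [mul_zero, add_zero, log_one, zero_sub, one_rpow]
  field_simp

end OneAddMulRpow

section GPD

variable {γ σ x : ℝ}

theorem add_mul_eq_mul_one_add_div_mul (hσ : σ ≠ 0) : σ + γ * x = σ * (1 + γ / σ * x) := by
  field_simp

theorem div_add_mul_rpow_inv (hσ : σ ≠ 0) (hu : 0 < 1 + γ / σ * x) :
    (σ / (σ + γ * x)) ^ (1 / γ) = (1 + γ / σ * x) ^ (-1 / γ) := by
  rw [add_mul_eq_mul_one_add_div_mul hσ, div_mul_cancel_left₀ hσ, inv_rpow hu.le,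
    ← rpow_neg hu.le, neg_div]

theorem rpow_neg_two_div {u : ℝ} (hu : 0 ≤ u) : u ^ (-2 / γ) = (u ^ (-1 / γ)) ^ 2 := by
  rw [← rpow_mul_natCast hu]
  ring_nf

theorem psiGamma_mul_gpdPdf (hγ : γ ≠ 0) (hγ1 : γ ≠ 1) (hσ : σ ≠ 0)
    (hu : 0 < 1 + γ / σ * x) :
    psiGamma γ σ x * gpdPdf γ σ x =
      (1 / (2 * (γ - 2) ^ 2) - 1 / (γ - 1) ^ 2) * (1 + γ / σ * x) ^ (-1 / γ - 1)
        + (γ ^ 2)⁻¹ * (1 + γ / σ * x) ^ (-2 / γ - 1)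
        + (2 * γ - 1) / ((γ - 1) ^ 2 * γ ^ 2) * (1 + γ / σ * x) ^ (-2 / γ)
        - ((γ - 1) * γ ^ 2)⁻¹ * ((1 + γ / σ * x) ^ (-2 / γ) * log (1 + γ / σ * x)) := by
  have hσx : σ + γ * x ≠ 0 := by
    rw [add_mul_eq_mul_one_add_div_mul hσ]; exact mul_ne_zero hσ hu.ne'
  rw [psiGamma, gpdPdf, mul_div_right_comm, div_add_mul_rpow_inv hσ hu, rpow_sub_one hu.ne',
    rpow_sub_one hu.ne', rpow_neg_two_div hu.le]
  generalize (1 + γ / σ * x) ^ (-1 / γ) = v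
  field_simp
  ring

theorem psiSigma_mul_gpdPdf (hγ : γ ≠ 0) (hγ1 : γ ≠ 1) (hσ : σ ≠ 0)
    (hu : 0 < 1 + γ / σ * x) :
    psiSigma γ σ x * gpdPdf γ σ x =
      σ⁻¹ * ((1 / (γ - 1) - 1 / (2 * (γ - 2))) * (1 + γ / σ * x) ^ (-1 / γ - 1)
        - γ⁻¹ * (1 + γ / σ * x) ^ (-2 / γ - 1)
        - ((γ - 1) * γ)⁻¹ * (1 + γ / σ * x) ^ (-2 / γ)) := by
  have hσx : σ + γ * x ≠ 0 := by
    rw [add_mul_eq_mul_one_add_div_mul hσ]; exact mul_ne_zero hσ hu.ne'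
  rw [psiSigma, gpdPdf, mul_div_right_comm, div_add_mul_rpow_inv hσ hu, rpow_sub_one hu.ne',
    rpow_sub_one hu.ne', rpow_neg_two_div hu.le]
  generalize (1 + γ / σ * x) ^ (-1 / γ) = v
  field_simp
  ring

theorem neg_div_sub_one_lt_neg_one {c : ℝ} (hc : 0 < c) (hγ : 0 < γ) : -c / γ - 1 < -1 := by
  rw [neg_div]
  linarith [div_pos hc hγ]

theorem neg_two_div_lt_neg_one (hγ0 : 0 < γ) (hγ2 : γ < 2) : -2 / γ < -1 := by
  rw [div_lt_iff₀ hγ0]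
  linarith

theorem integral_psiGamma_mul_gpdPdf (hγ0 : 0 < γ) (hγ1 : γ ≠ 1) (hγ2 : γ < 2)
    (hσ : 0 < σ) :
    ∫ x in Ioi 0, psiGamma γ σ x * gpdPdf γ σ x = 0 := by
  have ha : 0 < γ / σ := div_pos hγ0 hσ
  have hp₁ := neg_div_sub_one_lt_neg_one one_pos hγ0
  have hp₂ := neg_div_sub_one_lt_neg_one two_pos hγ0
  have hp₃ := neg_two_div_lt_neg_one hγ0 hγ2
  have i₁ : Integrable (fun x => (1 + γ / σ * x) ^ (-1 / γ - 1)) (volume.restrict (Ioi 0)) :=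
    integrableOn_Ioi_one_add_mul_rpow ha hp₁
  have i₂ : Integrable (fun x => (1 + γ / σ * x) ^ (-2 / γ - 1)) (volume.restrict (Ioi 0)) :=
    integrableOn_Ioi_one_add_mul_rpow ha hp₂
  have i₃ : Integrable (fun x => (1 + γ / σ * x) ^ (-2 / γ)) (volume.restrict (Ioi 0)) :=
    integrableOn_Ioi_one_add_mul_rpow ha hp₃
  have i₄ : Integrable (fun x => (1 + γ / σ * x) ^ (-2 / γ) * log (1 + γ / σ * x))
      (volume.restrict (Ioi 0)) :=
    integrableOn_Ioi_one_add_mul_rpow_mul_log ha hp₃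
  rw [setIntegral_congr_fun measurableSet_Ioi fun x hx =>
      psiGamma_mul_gpdPdf hγ0.ne' hγ1 hσ.ne' (one_add_mul_pos ha.le (le_of_lt hx)),
    integral_sub (by fun_prop) (by fun_prop), integral_add (by fun_prop) (by fun_prop),
    integral_add (by fun_prop) (by fun_prop)]
  simp only [integral_const_mul, integral_Ioi_one_add_mul_rpow ha hp₁,
    integral_Ioi_one_add_mul_rpow ha hp₂, integral_Ioi_one_add_mul_rpow ha hp₃,
    integral_Ioi_one_add_mul_rpow_mul_log ha hp₃]
  have : γ - 2 ≠ 0 := by linarith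
  have : -2 + γ ≠ 0 := by linarith
  field_simp
  ring

theorem integral_psiSigma_mul_gpdPdf (hγ0 : 0 < γ) (hγ1 : γ ≠ 1) (hγ2 : γ < 2)
    (hσ : 0 < σ) :
    ∫ x in Ioi 0, psiSigma γ σ x * gpdPdf γ σ x = 0 := by
  have ha : 0 < γ / σ := div_pos hγ0 hσ
  have hp₁ := neg_div_sub_one_lt_neg_one one_pos hγ0
  have hp₂ := neg_div_sub_one_lt_neg_one two_pos hγ0
  have hp₃ := neg_two_div_lt_neg_one hγ0 hγ2
  have i₁ : Integrable (fun x => (1 + γ / σ * x) ^ (-1 / γ - 1)) (volume.restrict (Ioi 0)) :=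
    integrableOn_Ioi_one_add_mul_rpow ha hp₁
  have i₂ : Integrable (fun x => (1 + γ / σ * x) ^ (-2 / γ - 1)) (volume.restrict (Ioi 0)) :=
    integrableOn_Ioi_one_add_mul_rpow ha hp₂
  have i₃ : Integrable (fun x => (1 + γ / σ * x) ^ (-2 / γ)) (volume.restrict (Ioi 0)) :=
    integrableOn_Ioi_one_add_mul_rpow ha hp₃
  rw [setIntegral_congr_fun measurableSet_Ioi fun x hx =>
      psiSigma_mul_gpdPdf hγ0.ne' hγ1 hσ.ne' (one_add_mul_pos ha.le (le_of_lt hx)),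
    integral_const_mul, integral_sub (by fun_prop) (by fun_prop),
    integral_sub (by fun_prop) (by fun_prop)]
  simp only [integral_const_mul, integral_Ioi_one_add_mul_rpow ha hp₁,
    integral_Ioi_one_add_mul_rpow ha hp₂, integral_Ioi_one_add_mul_rpow ha hp₃]
  have : γ - 2 ≠ 0 := by linarith
  have : -2 + γ ≠ 0 := by linarith
  field_simp
  ring

end GPD

/-- unbiasedness of the estimating function ψ at the true parameter. -/
theorem psi_unbiased (γ : ℝ) (hγ : γ ∈ Set.Ioo (0 : ℝ) 1) (σ : ℝ) (hσ : 0 < σ) :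
    (∫ x in Set.Ioi (0 : ℝ), psiGamma γ σ x * gpdPdf γ σ x = 0) ∧
    (∫ x in Set.Ioi (0 : ℝ), psiSigma γ σ x * gpdPdf γ σ x = 0) := by
  obtain ⟨hγ0, hγ1⟩ := hγ
  exact ⟨integral_psiGamma_mul_gpdPdf hγ0 hγ1.ne (by linarith) hσ,
    integral_psiSigma_mul_gpdPdf hγ0 hγ1.ne (by linarith) hσ⟩
end

section
/- For every γ ∈ (0,1) and σ > 0, the second moments under GPD(γ,σ) of the estimating function ψ satisfy: ∫₀^∞ ψ_γ(x;γ,σ)² f_{γ,σ}(x) dx = (8γ⁵ − 148γ⁴ + 918γ³ − 2587γ² + 3416γ − 1719) σ² / ( 12(γ−3)²(γ−2)⁴(2γ−3)³ ), ∫₀^∞ ψ_γ(x;γ,σ) ψ_σ(x;γ,σ) f_{γ,σ}(x) dx = ( γ(γ(−4(γ−15)γ − 285) + 548) − 369 ) σ / ( 12(γ−2)³(2γ² − 9γ + 9)² ), and ∫₀^∞ ψ_σ(x;γ,σ)² f_{γ,σ}(x) dx = ( γ(2γ−17) + 29 ) / ( 12(γ−3)(γ−2)²(2γ−3) ). -/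
/-!
The substitution `x = σ/γ · (e^{γs} - 1)` carries the GPD(γ, σ) density to the standard
exponential density `e^{-s}`, and turns both components of `ψ` into functions of the form
`A + P e^{-s} + (Q + R s) e^{-(1-γ)s}`. The product of two such functions with `e^{-s}` is a
linear combination of `s^k e^{-rs}` with `k ≤ 2` and `r ∈ {1, 2, 3, 2-γ, 3-γ, 3-2γ}`, whose
integrals are the Gamma integrals `k! / r^{k+1}`; the three moments are the resulting rational
functions of `γ`.
-/

open Real MeasureTheory

open Set Nat

def HasIntegralOnIoi (f : ℝ → ℝ) (I : ℝ) : Prop :=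
  IntegrableOn f (Ioi 0) ∧ ∫ x in Ioi 0, f x = I

namespace HasIntegralOnIoi

variable {f g : ℝ → ℝ} {I J : ℝ}

theorem add (hf : HasIntegralOnIoi f I) (hg : HasIntegralOnIoi g J) :
    HasIntegralOnIoi (fun x => f x + g x) (I + J) :=
  ⟨hf.1.add hg.1, by rw [integral_add hf.1 hg.1, hf.2, hg.2]⟩

theorem const_mul (hf : HasIntegralOnIoi f I) (c : ℝ) :
    HasIntegralOnIoi (fun x => c * f x) (c * I) :=
  ⟨hf.1.const_mul c, by rw [integral_const_mul, hf.2]⟩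

theorem congr (hf : HasIntegralOnIoi f I) (hfg : EqOn f g (Ioi 0)) (hIJ : I = J) :
    HasIntegralOnIoi g J :=
  ⟨hf.1.congr_fun hfg measurableSet_Ioi, by
    rw [← hIJ, ← hf.2, setIntegral_congr_fun measurableSet_Ioi hfg]⟩

end HasIntegralOnIoi

theorem hasIntegralOnIoi_pow_mul_exp_neg_mul (k : ℕ) {r : ℝ} (hr : 0 < r) :
    HasIntegralOnIoi (fun s => s ^ k * exp (-(r * s))) (k ! / r ^ (k + 1)) := by
  have hpow : EqOn (fun s : ℝ => s ^ ((k + 1 : ℕ) - 1 : ℝ) * exp (-(r * s)))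
      (fun s => s ^ k * exp (-(r * s))) (Ioi 0) := fun s _ => by
    simp [rpow_natCast]
  refine ⟨?_, ?_⟩
  · refine (integrableOn_rpow_mul_exp_neg_mul_rpow (neg_one_lt_zero.trans_le k.cast_nonneg)
      one_pos hr).congr_fun (fun s _ => ?_) measurableSet_Ioi
    simp [rpow_natCast]
  · rw [← setIntegral_congr_fun measurableSet_Ioi hpow,
      integral_rpow_mul_exp_neg_mul_Ioi (by positivity) hr, Nat.cast_add_one,
      Gamma_nat_eq_factorial, div_rpow zero_le_one hr.le, one_rpow, ← Nat.cast_add_one,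
      rpow_natCast]
    field_simp

/-- The GPD(γ, σ) quantile function evaluated at `1 - e^{-s}`. -/
noncomputable def gpdOfExp (γ σ s : ℝ) : ℝ := σ / γ * (exp (γ * s) - 1)

section gpdOfExp

variable {γ σ : ℝ}

theorem one_add_mul_gpdOfExp_div (hγ : γ ≠ 0) (hσ : σ ≠ 0) (s : ℝ) :
    1 + γ * gpdOfExp γ σ s / σ = exp (γ * s) := by
  unfold gpdOfExp
  field_simp
  ring

theorem hasDerivAt_gpdOfExp (hγ : γ ≠ 0) (s : ℝ) :
    HasDerivAt (gpdOfExp γ σ) (σ * exp (γ * s)) s := by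
  refine (((((hasDerivAt_id' s).const_mul γ).exp).sub_const 1).const_mul (σ / γ)).congr_deriv ?_
  field_simp

theorem strictMono_gpdOfExp (hγ : 0 < γ) (hσ : 0 < σ) : StrictMono (gpdOfExp γ σ) :=
  fun s t hst => by
    unfold gpdOfExp
    gcongr

theorem gpdOfExp_image_Ioi (hγ : 0 < γ) (hσ : 0 < σ) : gpdOfExp γ σ '' Ioi 0 = Ioi 0 := by
  ext y
  constructor
  · rintro ⟨s, hs, rfl⟩
    simpa [gpdOfExp] using strictMono_gpdOfExp hγ hσ hs
  · intro hy
    have hy' : 1 < 1 + γ * y / σ := lt_add_of_pos_right 1 (by have : (0:ℝ) < y := hy; positivity)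
    refine ⟨log (1 + γ * y / σ) / γ, div_pos (log_pos hy') hγ, ?_⟩
    rw [gpdOfExp, mul_div_cancel₀ _ hγ.ne', exp_log (by linarith)]
    field_simp
    ring

theorem mul_gpdPdf_gpdOfExp (hγ : γ ≠ 0) (hσ : σ ≠ 0) (s : ℝ) :
    σ * exp (γ * s) * gpdPdf γ σ (gpdOfExp γ σ s) = exp (-s) := by
  rw [gpdPdf, one_add_mul_gpdOfExp_div hγ hσ, ← exp_mul, mul_mul_mul_comm, mul_inv_cancel₀ hσ,
    one_mul, ← exp_add]
  congr 1
  field_simp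
  ring

end gpdOfExp

theorem integral_mul_gpdPdf_eq_integral_gpdOfExp {γ σ : ℝ} (hγ : 0 < γ) (hσ : 0 < σ) (h : ℝ → ℝ) :
    ∫ x in Ioi (0 : ℝ), h x * gpdPdf γ σ x = ∫ s in Ioi (0 : ℝ), h (gpdOfExp γ σ s) * exp (-s) := by
  conv_lhs => rw [← gpdOfExp_image_Ioi hγ hσ]
  rw [integral_image_eq_integral_abs_deriv_smul measurableSet_Ioi
    (fun s _ => (hasDerivAt_gpdOfExp hγ.ne' s).hasDerivWithinAt)
    (strictMono_gpdOfExp hγ hσ).injective.injOn]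
  refine setIntegral_congr_fun measurableSet_Ioi fun s _ => ?_
  rw [smul_eq_mul, abs_of_pos (by positivity), ← mul_gpdPdf_gpdOfExp hγ.ne' hσ.ne' s]
  ring

noncomputable def expCombo (δ A P Q R s : ℝ) : ℝ :=
  A + P * exp (-s) + (Q + R * s) * exp (-(δ * s))

theorem integral_expCombo_mul_expCombo_mul_exp_neg {δ : ℝ} (hδ : 0 < 1 + 2 * δ)
    (A P Q R A' P' Q' R' : ℝ) :
    ∫ s in Ioi (0 : ℝ), expCombo δ A P Q R s * expCombo δ A' P' Q' R' s * exp (-s) =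
      A * A' + (A * P' + A' * P) / 2 + (A * Q' + A' * Q) / (1 + δ)
        + (A * R' + A' * R) / (1 + δ) ^ 2 + P * P' / 3 + (P * Q' + P' * Q) / (2 + δ)
        + (P * R' + P' * R) / (2 + δ) ^ 2 + Q * Q' / (1 + 2 * δ)
        + (Q * R' + Q' * R) / (1 + 2 * δ) ^ 2 + 2 * (R * R') / (1 + 2 * δ) ^ 3 := by
  have term (a b k : ℕ) (hab : 0 < (a : ℝ) + b * δ) :=
    hasIntegralOnIoi_pow_mul_exp_neg_mul k hab
  have h1 : 0 < 1 + δ := by linarith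
  have h2 : 0 < 2 + δ := by linarith
  have key :=
    ((term 1 0 0 (by norm_num)).const_mul (A * A')).add <|
    ((term 2 0 0 (by norm_num)).const_mul (A * P' + A' * P)).add <|
    ((term 1 1 0 (by push_cast; linarith)).const_mul (A * Q' + A' * Q)).add <|
    ((term 1 1 1 (by push_cast; linarith)).const_mul (A * R' + A' * R)).add <|
    ((term 3 0 0 (by norm_num)).const_mul (P * P')).add <|
    ((term 2 1 0 (by push_cast; linarith)).const_mul (P * Q' + P' * Q)).add <|
    ((term 2 1 1 (by push_cast; linarith)).const_mul (P * R' + P' * R)).add <|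
    ((term 1 2 0 (by push_cast; linarith)).const_mul (Q * Q')).add <|
    ((term 1 2 1 (by push_cast; linarith)).const_mul (Q * R' + Q' * R)).add <|
    ((term 1 2 2 (by push_cast; linarith)).const_mul (R * R'))
  refine (key.congr (fun s _ => ?_) ?_).2
  · have hexp (a b : ℕ) : exp (-((a + b * δ) * s)) = exp (-s) ^ a * exp (-(δ * s)) ^ b := by
      rw [← exp_nat_mul, ← exp_nat_mul, ← exp_add]
      ring_nf
    simp only [hexp, expCombo]
    ring
  · norm_num [Nat.factorial]
    ring

section psi

variable {γ σ : ℝ}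

theorem rpow_div_gpdOfExp (hγ : γ ≠ 0) (hσ : σ ≠ 0) (s : ℝ) :
    (σ / (σ + γ * gpdOfExp γ σ s)) ^ (1 / γ) = exp (-s) := by
  have h : σ / (σ + γ * gpdOfExp γ σ s) = exp (-(γ * s)) := by
    rw [exp_neg, ← one_add_mul_gpdOfExp_div hγ hσ]
    field_simp
  rw [h, ← exp_mul]
  field_simp

theorem log_one_add_mul_gpdOfExp_div (hγ : γ ≠ 0) (hσ : σ ≠ 0) (s : ℝ) :
    log (1 + γ * gpdOfExp γ σ s / σ) = γ * s := by
  rw [one_add_mul_gpdOfExp_div hγ hσ, log_exp]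

theorem exp_neg_one_sub_mul (s : ℝ) : exp (-((1 - γ) * s)) = exp (-s) * exp (γ * s) := by
  rw [← exp_add]
  ring_nf

theorem psiGamma_gpdOfExp (hγ : γ ≠ 0) (hγ1 : γ ≠ 1) (hσ : σ ≠ 0) (s : ℝ) :
    psiGamma γ σ (gpdOfExp γ σ s) =
      expCombo (1 - γ) (σ / (2 * (γ - 2) ^ 2) - σ / (γ - 1) ^ 2) (σ / γ ^ 2)
        ((2 * γ - 1) * σ / ((γ - 1) ^ 2 * γ ^ 2)) (-(σ / ((γ - 1) * γ))) s := by
  have hγ1' : γ - 1 ≠ 0 := sub_ne_zero.mpr hγ1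
  rw [psiGamma, rpow_div_gpdOfExp hγ hσ, log_one_add_mul_gpdOfExp_div hγ hσ, expCombo,
    exp_neg_one_sub_mul]
  unfold gpdOfExp
  field_simp
  ring

theorem psiSigma_gpdOfExp (hγ : γ ≠ 0) (hγ1 : γ ≠ 1) (hσ : σ ≠ 0) (s : ℝ) :
    psiSigma γ σ (gpdOfExp γ σ s) =
      expCombo (1 - γ) (1 / (γ - 1) - 1 / (2 * (γ - 2))) (-(1 / γ)) (-(1 / ((γ - 1) * γ))) 0 s := by
  have hγ1' : γ - 1 ≠ 0 := sub_ne_zero.mpr hγ1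
  rw [psiSigma, rpow_div_gpdOfExp hγ hσ, expCombo, exp_neg_one_sub_mul]
  unfold gpdOfExp
  field_simp
  ring

end psi

/-- second moments of the estimating function ψ under GPD(γ,σ). -/
theorem psi_second_moments (γ : ℝ) (hγ : γ ∈ Set.Ioo (0 : ℝ) 1) (σ : ℝ) (hσ : 0 < σ) :
    (∫ x in Set.Ioi (0 : ℝ), psiGamma γ σ x ^ 2 * gpdPdf γ σ x
      = (8 * γ ^ 5 - 148 * γ ^ 4 + 918 * γ ^ 3 - 2587 * γ ^ 2 + 3416 * γ - 1719) * σ ^ 2 /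
          (12 * (γ - 3) ^ 2 * (γ - 2) ^ 4 * (2 * γ - 3) ^ 3)) ∧
    (∫ x in Set.Ioi (0 : ℝ), psiGamma γ σ x * psiSigma γ σ x * gpdPdf γ σ x
      = (γ * (γ * (-4 * (γ - 15) * γ - 285) + 548) - 369) * σ /
          (12 * (γ - 2) ^ 3 * (2 * γ ^ 2 - 9 * γ + 9) ^ 2)) ∧
    (∫ x in Set.Ioi (0 : ℝ), psiSigma γ σ x ^ 2 * gpdPdf γ σ x
      = (γ * (2 * γ - 17) + 29) / (12 * (γ - 3) * (γ - 2) ^ 2 * (2 * γ - 3))) := by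
  obtain ⟨hγ0, hγ1⟩ := hγ
  -- `field_simp` meets the last two denominators both as `2 * γ` and as `γ * 2`.
  obtain ⟨_, _, _, _, _, _, _, _, _⟩ : γ - 1 ≠ 0 ∧ γ - 2 ≠ 0 ∧ γ - 3 ≠ 0 ∧ 2 - γ ≠ 0 ∧ 3 - γ ≠ 0 ∧
      2 * γ - 3 ≠ 0 ∧ γ * 2 - 3 ≠ 0 ∧ 3 - 2 * γ ≠ 0 ∧ 3 - γ * 2 ≠ 0 := by
    refine ⟨?_, ?_, ?_, ?_, ?_, ?_, ?_, ?_, ?_⟩ <;> linarith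
  rw [show 2 * γ ^ 2 - 9 * γ + 9 = (2 * γ - 3) * (γ - 3) by ring]
  simp only [integral_mul_gpdPdf_eq_integral_gpdOfExp hγ0 hσ, pow_two (psiGamma γ σ _), pow_two (psiSigma γ σ _),
    psiGamma_gpdOfExp hγ0.ne' hγ1.ne hσ.ne', psiSigma_gpdOfExp hγ0.ne' hγ1.ne hσ.ne',
    integral_expCombo_mul_expCombo_mul_exp_neg (show 0 < 1 + 2 * (1 - γ) by linarith),
    show (1 : ℝ) + (1 - γ) = 2 - γ by ring, show (2 : ℝ) + (1 - γ) = 3 - γ by ring,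
    show (1 : ℝ) + 2 * (1 - γ) = 3 - 2 * γ by ring, mul_zero, add_zero, zero_div]
  refine ⟨?_, ?_, ?_⟩ <;> field_simp <;> ring
end
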